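/- Let k be a field of characteristic 0. The naively transferred cooperations stabilise: for all integers n ≥ 1 and all N, N' with N > n and N' > n, the maps θ^{⊗n}∘δ^{(n−1)}∘ω_N and θ^{⊗n}∘δ^{(n−1)}∘ω_{N'} from C to C^{⊗n} are equal. -/

import Mathlib

open Finsupp TensorProduct

noncomputable section

variable (k : Type) [Field k] [CharZero k]

/-- Underlying space of `Ω∨`: basis `α i ↔ Sum.inl i`, `β i ↔ Sum.inr i`. -/
abbrev Om : Type := (ℕ ⊕ ℕ) →₀ k

/-- the basis vector `α_i` of `Ω∨` (degree 0, dual of `t^i`) -/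
def av (i : ℕ) : Om k := Finsupp.single (Sum.inl i) 1

/-- the basis vector `β_i` of `Ω∨` (degree 1, dual of `t^i dt`) -/
def bv (i : ℕ) : Om k := Finsupp.single (Sum.inr i) 1

/-- the differential of `Ω∨`: `d β_i = (i+1) α_{i+1}`, `d α_i = 0`. -/
def dOm : Om k →ₗ[k] Om k :=
  Finsupp.lift (Om k) k (ℕ ⊕ ℕ) fun x =>
    match x with
    | Sum.inl _ => 0
    | Sum.inr i => ((i : k) + 1) • av k (i + 1)

/-- Underlying space of `C = C_•([0,1])`: basis `𝟎 ↔ 0`, `𝟏 ↔ 1`, `𝟎𝟏 ↔ 2`. -/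
abbrev Cc : Type := Fin 3 →₀ k

/-- the degree-0 basis vector `𝟎` of `C` -/
def c0 : Cc k := Finsupp.single 0 1
/-- the degree-0 basis vector `𝟏` of `C` -/
def c1 : Cc k := Finsupp.single 1 1
/-- the degree-1 basis vector `𝟎𝟏` of `C` -/
def c01 : Cc k := Finsupp.single 2 1

/-- the differential of `C`: `d 𝟎𝟏 = 𝟏 - 𝟎`, `d 𝟎 = d 𝟏 = 0`. -/
def dC : Cc k →ₗ[k] Cc k :=
  Finsupp.lift (Cc k) k (Fin 3) fun x => if x = 2 then c1 k - c0 k else 0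

/-- the projection `θ : Ω∨ → C`. -/
def θm : Om k →ₗ[k] Cc k :=
  Finsupp.lift (Cc k) k (ℕ ⊕ ℕ) fun x =>
    match x with
    | Sum.inl 0 => c0 k
    | Sum.inl 1 => c1 k - c0 k
    | Sum.inl _ => 0
    | Sum.inr 0 => c01 k
    | Sum.inr _ => 0

/-- the inclusion `ω_N : C → Ω∨`. -/
def ωm (N : ℕ) : Cc k →ₗ[k] Om k :=
  Finsupp.lift (Om k) k (Fin 3) fun x =>
    if x = 0 then av k 0
    else if x = 1 then ∑ p ∈ Finset.range N, av k p
    else ∑ p ∈ Finset.range (N - 1), ((p : k) + 1)⁻¹ • bv k p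

/-- the homotopy `K_N : Ω∨ → Ω∨`. -/
def Km (N : ℕ) : Om k →ₗ[k] Om k :=
  Finsupp.lift (Om k) k (ℕ ⊕ ℕ) fun x =>
    match x with
    | Sum.inl 0 => 0
    | Sum.inl 1 => - ∑ j ∈ Finset.Ico 1 (N - 1), ((j : k) + 1)⁻¹ • bv k j
    | Sum.inl (i + 2) => ((i : k) + 2)⁻¹ • bv k (i + 1)
    | Sum.inr _ => 0

/-- the filtration `Ω∨_(N)`, spanned by the `α_j` with `j ≥ N` and the `β_j` with `j ≥ N - 1`. -/
def Filt (N : ℕ) : Submodule k (Om k) :=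
  Submodule.span k
    ({x | ∃ j, N ≤ j ∧ x = av k j} ∪ {x | ∃ j, N ≤ j + 1 ∧ x = bv k j})

end

noncomputable section
variable (k : Type) [Field k] [CharZero k]

/-- the comultiplication `δ` on `Ω∨`:
`δ α_i = ∑_{a+b=i} α_a ⊗ α_b`, `δ β_i = ∑_{a+b=i} (β_a ⊗ α_b + α_a ⊗ β_b)`. -/
def δm : Om k →ₗ[k] Om k ⊗[k] Om k :=
  Finsupp.lift (Om k ⊗[k] Om k) k (ℕ ⊕ ℕ) fun x =>
    match x with
    | Sum.inl i => ∑ ab ∈ Finset.HasAntidiagonal.antidiagonal i, av k ab.1 ⊗ₜ[k] av k ab.2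
    | Sum.inr i => ∑ ab ∈ Finset.HasAntidiagonal.antidiagonal i,
        (bv k ab.1 ⊗ₜ[k] av k ab.2 + av k ab.1 ⊗ₜ[k] bv k ab.2)

/-- the counit `ε` on `Ω∨`: `ε α_0 = 1`, `ε α_i = 0` for `i ≥ 1`, `ε β_i = 0`. -/
def εm : Om k →ₗ[k] k :=
  Finsupp.lift k k (ℕ ⊕ ℕ) fun x =>
    match x with
    | Sum.inl 0 => 1
    | _ => 0

end

noncomputable section
variable (k : Type) [Field k] [CharZero k]

/-- `OmPow n` is the (n+1)-fold tensor power `(Ω∨)^{⊗(n+1)}`. -/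
def OmPow : ℕ → ModuleCat k
  | 0 => ModuleCat.of k (Om k)
  | n + 1 => ModuleCat.of k (Om k ⊗[k] (OmPow n))

/-- `CcPow n` is the (n+1)-fold tensor power `C^{⊗(n+1)}`. -/
def CcPow : ℕ → ModuleCat k
  | 0 => ModuleCat.of k (Cc k)
  | n + 1 => ModuleCat.of k (Cc k ⊗[k] (CcPow n))

/-- `δiter n : Ω∨ → (Ω∨)^{⊗(n+1)}` is the `n`-fold iterated comultiplication
`δ^{(n)}`, defined recursively by `δ^{(0)} = id` and `δ^{(n+1)} = (id ⊗ δ^{(n)}) ∘ δ`. -/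
def δiter : (n : ℕ) → (Om k →ₗ[k] OmPow k n)
  | 0 => LinearMap.id
  | n + 1 => (TensorProduct.map LinearMap.id (δiter n)) ∘ₗ δm k

/-- `θpow n : (Ω∨)^{⊗(n+1)} → C^{⊗(n+1)}` is the (n+1)-fold tensor power `θ^{⊗(n+1)}`. -/
def θpow : (n : ℕ) → (OmPow k n →ₗ[k] CcPow k n)
  | 0 => θm k
  | n + 1 => TensorProduct.map (θm k) (θpow n)

/-- the pure tensor `x ⊗ x ⊗ ⋯ ⊗ x` (`n+1` factors) in `C^{⊗(n+1)}`. -/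
def cpow (x : Cc k) : (n : ℕ) → CcPow k n
  | 0 => x
  | n + 1 => x ⊗ₜ[k] cpow x n

/-- the pure tensor `f 0 ⊗ f 1 ⊗ ⋯ ⊗ f n` in `C^{⊗(n+1)}`. -/
def tensorOf (f : ℕ → Cc k) : (n : ℕ) → CcPow k n
  | 0 => f 0
  | n + 1 => f 0 ⊗ₜ[k] tensorOf (fun i => f (i + 1)) n

end

/-!
`θ` kills `α_p` for `p ≥ 2` and `β_p` for `p ≥ 1`. A term of `δ^{(m)} α_p` is a tensor of
`m + 1` factors `α_{a_i}` with `∑ a_i = p`, so if `p ≥ m + 2` some `a_i ≥ 2`; likewise a term of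
`δ^{(m)} β_p` with `p ≥ m + 1` has a factor `β_a` with `a ≥ 1` or `α_a` with `a ≥ 2`. Hence
`θ^{⊗(m+1)} ∘ δ^{(m)}` annihilates all of `ω_N(𝟏)` and `ω_N(𝟎𝟏)` beyond the terms present
for `N = m + 2`, so every `ω_N` with `N > m + 1` gives the same map as `ω_{m+2}`.
-/

section Stabilisation
variable {k : Type} [Field k]

lemma θm_av_of_two_le {p : ℕ} (hp : 2 ≤ p) : θm k (av k p) = 0 := by
  obtain ⟨q, rfl⟩ := Nat.exists_eq_add_of_le' hp
  simp [θm, av]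

lemma θm_bv_of_one_le {p : ℕ} (hp : 1 ≤ p) : θm k (bv k p) = 0 := by
  obtain ⟨q, rfl⟩ := Nat.exists_eq_add_of_le' hp
  simp [θm, bv]

lemma δm_av (i : ℕ) :
    δm k (av k i) = ∑ ab ∈ Finset.HasAntidiagonal.antidiagonal i, av k ab.1 ⊗ₜ[k] av k ab.2 := by
  simp [δm, av]

lemma δm_bv (i : ℕ) :
    δm k (bv k i) = ∑ ab ∈ Finset.HasAntidiagonal.antidiagonal i,
      (bv k ab.1 ⊗ₜ[k] av k ab.2 + av k ab.1 ⊗ₜ[k] bv k ab.2) := by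
  simp [δm, bv]

lemma ωm_c0 (N : ℕ) : ωm k N (c0 k) = av k 0 := by
  simp [ωm, c0]

lemma ωm_c1 (N : ℕ) : ωm k N (c1 k) = ∑ p ∈ Finset.range N, av k p := by
  simp [ωm, c1]

lemma ωm_c01 (N : ℕ) :
    ωm k N (c01 k) = ∑ p ∈ Finset.range (N - 1), ((p : k) + 1)⁻¹ • bv k p := by
  simp [ωm, c01]

lemma θpow_δiter_succ (m : ℕ) (x : Om k) :
    θpow k (m + 1) (δiter k (m + 1) x)
      = TensorProduct.map (θm k) (θpow k m ∘ₗ δiter k m) (δm k x) :=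
  TensorProduct.map_map _ _ _ _ _

lemma θpow_δiter_av_of_le {m p : ℕ} (hp : m + 2 ≤ p) :
    θpow k m (δiter k m (av k p)) = 0 := by
  induction m generalizing p with
  | zero => exact θm_av_of_two_le hp
  | succ m ih =>
    rw [θpow_δiter_succ, δm_av, map_sum]
    refine Finset.sum_eq_zero fun ⟨a, b⟩ hab => ?_
    rw [Finset.HasAntidiagonal.mem_antidiagonal] at hab
    rw [TensorProduct.map_tmul, LinearMap.comp_apply]
    by_cases ha : 2 ≤ a
    · rw [θm_av_of_two_le ha]; exact TensorProduct.zero_tmul _ _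
    · rw [ih (by omega)]; exact TensorProduct.tmul_zero _ _

lemma θpow_δiter_bv_of_le {m p : ℕ} (hp : m + 1 ≤ p) :
    θpow k m (δiter k m (bv k p)) = 0 := by
  induction m generalizing p with
  | zero => exact θm_bv_of_one_le hp
  | succ m ih =>
    rw [θpow_δiter_succ, δm_bv, map_sum]
    refine Finset.sum_eq_zero fun ⟨a, b⟩ hab => ?_
    rw [Finset.HasAntidiagonal.mem_antidiagonal] at hab
    rw [map_add, TensorProduct.map_tmul, TensorProduct.map_tmul, LinearMap.comp_apply,
      LinearMap.comp_apply]
    have hβα : θm k (bv k a) ⊗ₜ[k] θpow k m (δiter k m (av k b)) = 0 := by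
      by_cases ha : 1 ≤ a
      · rw [θm_bv_of_one_le ha, TensorProduct.zero_tmul]
      · rw [θpow_δiter_av_of_le (by omega), TensorProduct.tmul_zero]
    have hαβ : θm k (av k a) ⊗ₜ[k] θpow k m (δiter k m (bv k b)) = 0 := by
      by_cases ha : 2 ≤ a
      · rw [θm_av_of_two_le ha, TensorProduct.zero_tmul]
      · rw [ih (by omega), TensorProduct.tmul_zero]
    rw [hβα, hαβ]; exact add_zero 0

lemma θpow_δiter_ωm_of_lt {m N : ℕ} (hN : m + 1 < N) :
    θpow k m ∘ₗ δiter k m ∘ₗ ωm k N = θpow k m ∘ₗ δiter k m ∘ₗ ωm k (m + 2) := by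
  refine Finsupp.lhom_ext' fun x => LinearMap.ext_ring ?_
  fin_cases x
  · show θpow k m (δiter k m (ωm k N (c0 k))) = θpow k m (δiter k m (ωm k (m + 2) (c0 k)))
    rw [ωm_c0, ωm_c0]
  · show θpow k m (δiter k m (ωm k N (c1 k))) = θpow k m (δiter k m (ωm k (m + 2) (c1 k)))
    simp only [ωm_c1, map_sum]
    exact Finset.eventually_constant_sum (fun p hp => θpow_δiter_av_of_le hp) hN
  · show θpow k m (δiter k m (ωm k N (c01 k))) = θpow k m (δiter k m (ωm k (m + 2) (c01 k)))
    simp only [ωm_c01, map_sum, map_smul]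
    exact Finset.eventually_constant_sum
      (fun p hp => by rw [θpow_δiter_bv_of_le hp, smul_zero]) (by omega)

end Stabilisation

theorem statement7_general (k : Type) [Field k] (n N N' : ℕ)
    (hn : 1 ≤ n) (hN : n < N) (hN' : n < N') :
    θpow k (n - 1) ∘ₗ δiter k (n - 1) ∘ₗ ωm k N
      = θpow k (n - 1) ∘ₗ δiter k (n - 1) ∘ₗ ωm k N' := by
  obtain ⟨m, rfl⟩ := Nat.exists_eq_add_of_le' hn
  rw [Nat.add_sub_cancel, θpow_δiter_ωm_of_lt hN, θpow_δiter_ωm_of_lt hN']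

/-- The naively transferred cooperations stabilise: for all `n ≥ 1` and
all `N, N' > n`, the maps `θ^{⊗n} ∘ δ^{(n-1)} ∘ ω_N` and `θ^{⊗n} ∘ δ^{(n-1)} ∘ ω_{N'}`
from `C` to `C^{⊗n}` are equal. -/
theorem statement7 (k : Type) [Field k] [CharZero k] (n N N' : ℕ)
    (hn : 1 ≤ n) (hN : n < N) (hN' : n < N') :
    θpow k (n - 1) ∘ₗ δiter k (n - 1) ∘ₗ ωm k N
      = θpow k (n - 1) ∘ₗ δiter k (n - 1) ∘ₗ ωm k N' :=
  statement7_general k n N N' hn hN hN'
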